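/- arXiv:2006.03945 — 2 statements merged into one kernel-verified Lean document; each statement's English description precedes it below -/
import Mathlib

section
/- Fix distinct real numbers t₁ < t₂ < ⋯ < t_k in (0, π) and positive integers m₁,…,m_k with m₁ + ⋯ + m_k = m/2. Let 𝒯 be the (m/2 + 1)-dimensional space of trigonometric polynomials: 𝒯 = span{1, cos 2t, sin 2t, …, cos((m/2)t), sin((m/2)t)} if m/2 is even, and 𝒯 = span{cos t, sin t, cos 3t, sin 3t, …, cos((m/2)t), sin((m/2)t)} if m/2 is odd. Then the linear map 𝒯 → ℝ^{m/2} sending h to the tuple (h^{(l)}(t_j))_{0 ≤ l ≤ m_j−1, 1 ≤ j ≤ k} is surjective; equivalently its kernel is one-dimensional, so there is at most one function f ∈ 𝒯 with f(0) = 1 vanishing to order m_j at each t_j. -/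
/-!
For `0 ≤ p < m j` consider `sin^p (x - t j) cos^(m j - p) (x - t j) ∏_{i ≠ j} sin^(m i) (x - t i)`.
It is a product of `M` functions from `span {sin, cos}`, so it lies in `𝒯`: by the product-to-sum
formulas, multiplying frequencies `a ≡ M` and `b ≡ N (mod 2)` produces `a ± b ≡ M + N`.
It vanishes to order `m i` at every other node `t i`, and to order exactly `p` at `t j`, where its
`p`-th derivative is `p! ∏_{i ≠ j} sin^(m i) (t j - t i) ≠ 0` because distinct nodes of `(0, π)`
do not differ by a multiple of `π`. Hence the derivatives at `t j` of orders `< m j` of these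
functions form a lower triangular matrix with nonzero diagonal, and the interpolation problem
splits into these invertible blocks.
-/

open Real Finset
open scoped ContDiff Nat

def trigSpace (M : ℕ) : Submodule ℝ (ℝ → ℝ) :=
  Submodule.span ℝ
    {f : ℝ → ℝ | ∃ s : ℕ, s ≤ M ∧ s % 2 = M % 2 ∧
      ((f = fun x => Real.cos ((s : ℝ) * x)) ∨ (f = fun x => Real.sin ((s : ℝ) * x)))}

lemma cos_natCast_mul_mem_trigSpace {M n : ℕ} (hn : n ≤ M) (hpar : n % 2 = M % 2) :
    (fun x => cos (n * x)) ∈ trigSpace M :=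
  Submodule.subset_span ⟨n, hn, hpar, Or.inl rfl⟩

lemma sin_natCast_mul_mem_trigSpace {M n : ℕ} (hn : n ≤ M) (hpar : n % 2 = M % 2) :
    (fun x => sin (n * x)) ∈ trigSpace M :=
  Submodule.subset_span ⟨n, hn, hpar, Or.inr rfl⟩

lemma cos_intCast_mul_mem_trigSpace {M : ℕ} {s : ℤ} (hs : s.natAbs ≤ M)
    (hpar : s.natAbs % 2 = M % 2) : (fun x => cos (s * x)) ∈ trigSpace M := by
  obtain ⟨n, rfl | rfl⟩ := Int.eq_nat_or_neg s <;>
  · simpa only [Int.cast_neg, Int.cast_natCast, neg_mul, cos_neg] using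
      cos_natCast_mul_mem_trigSpace (M := M) (n := n) (by simpa using hs) (by simpa using hpar)

lemma sin_intCast_mul_mem_trigSpace {M : ℕ} {s : ℤ} (hs : s.natAbs ≤ M)
    (hpar : s.natAbs % 2 = M % 2) : (fun x => sin (s * x)) ∈ trigSpace M := by
  obtain ⟨n, rfl | rfl⟩ := Int.eq_nat_or_neg s
  · exact_mod_cast sin_natCast_mul_mem_trigSpace (by simpa using hs) (by simpa using hpar)
  · convert neg_mem (sin_natCast_mul_mem_trigSpace (M := M) (n := n) (by simpa using hs)
      (by simpa using hpar)) using 1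
    funext x
    simp

lemma mul_mem_trigSpace_of_generators {M N a b : ℕ} (ha : a ≤ M) (ha' : a % 2 = M % 2)
    (hb : b ≤ N) (hb' : b % 2 = N % 2) {f g : ℝ → ℝ}
    (hf : (f = fun x => cos (a * x)) ∨ f = fun x => sin (a * x))
    (hg : (g = fun x => cos (b * x)) ∨ g = fun x => sin (b * x)) :
    f * g ∈ trigSpace (M + N) := by
  have hcu := cos_intCast_mul_mem_trigSpace (M := M + N) (s := a + b) (by omega) (by omega)
  have hsu := sin_intCast_mul_mem_trigSpace (M := M + N) (s := a + b) (by omega) (by omega)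
  have hcv := cos_intCast_mul_mem_trigSpace (M := M + N) (s := a - b) (by omega) (by omega)
  have hsv := sin_intCast_mul_mem_trigSpace (M := M + N) (s := a - b) (by omega) (by omega)
  have hu (x : ℝ) : ((a + b : ℤ) : ℝ) * x = a * x + b * x := by push_cast; ring
  have hv (x : ℝ) : ((a - b : ℤ) : ℝ) * x = a * x - b * x := by push_cast; ring
  have half {f : ℝ → ℝ} (hf : f ∈ trigSpace (M + N)) := (trigSpace (M + N)).smul_mem (1 / 2 : ℝ) hf
  (rcases hf with rfl | rfl <;> rcases hg with rfl | rfl) <;>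
  [convert add_mem (half hcv) (half hcu) using 1; convert sub_mem (half hsu) (half hsv) using 1;
    convert add_mem (half hsu) (half hsv) using 1; convert sub_mem (half hcv) (half hcu) using 1]
  <;>
  · funext x
    simp only [Pi.mul_apply, Pi.add_apply, Pi.sub_apply, Pi.smul_apply, smul_eq_mul, hu, hv,
      cos_add, cos_sub, sin_add, sin_sub]
    ring

instance : SetLike.GradedMonoid trigSpace where
  one_mem := by
    simpa [Pi.one_def] using cos_natCast_mul_mem_trigSpace (M := 0) (n := 0) le_rfl rfl
  mul_mem M N f g hf hg := by
    have hfg := Submodule.mul_mem_mul hf hg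
    rw [trigSpace, trigSpace, Submodule.span_mul_span] at hfg
    refine Submodule.span_le.mpr ?_ hfg
    rintro _ ⟨f, ⟨a, ha, ha', hf⟩, g, ⟨b, hb, hb', hg⟩, rfl⟩
    exact mul_mem_trigSpace_of_generators ha ha' hb hb' hf hg

lemma sin_sub_mem_trigSpace (c : ℝ) : (fun x => sin (x - c)) ∈ trigSpace 1 := by
  have hc := cos_natCast_mul_mem_trigSpace (M := 1) (n := 1) le_rfl rfl
  have hs := sin_natCast_mul_mem_trigSpace (M := 1) (n := 1) le_rfl rfl
  convert sub_mem ((trigSpace 1).smul_mem (cos c) hs) ((trigSpace 1).smul_mem (sin c) hc) using 1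
  funext x
  simp [sin_sub]
  ring

lemma cos_sub_mem_trigSpace (c : ℝ) : (fun x => cos (x - c)) ∈ trigSpace 1 := by
  have hc := cos_natCast_mul_mem_trigSpace (M := 1) (n := 1) le_rfl rfl
  have hs := sin_natCast_mul_mem_trigSpace (M := 1) (n := 1) le_rfl rfl
  convert add_mem ((trigSpace 1).smul_mem (cos c) hc) ((trigSpace 1).smul_mem (sin c) hs) using 1
  funext x
  simp [cos_sub]
  ring

lemma Real.sin_sub_ne_zero_of_mem_Ioo {x y : ℝ} (hx : x ∈ Set.Ioo 0 π) (hy : y ∈ Set.Ioo 0 π)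
    (hxy : x ≠ y) : sin (x - y) ≠ 0 := by
  rw [Ne, sin_eq_zero_iff_of_lt_of_lt (by linarith [hx.1, hy.2]) (by linarith [hx.2, hy.1]),
    sub_eq_zero]
  exact hxy

lemma contDiff_sin_sub (c : ℝ) : ContDiff ℝ ∞ fun x => sin (x - c) := by fun_prop

lemma contDiff_cos_sub (c : ℝ) : ContDiff ℝ ∞ fun x => cos (x - c) := by fun_prop

section PowMul

variable {𝕜 : Type*} [NontriviallyNormedField 𝕜] {f g : 𝕜 → 𝕜}

lemma deriv_pow_succ_mul (hf : Differentiable 𝕜 f) (hg : Differentiable 𝕜 g) (p : ℕ) :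
    deriv (f ^ (p + 1) * g) = f ^ p * ((p + 1 : 𝕜) • deriv f * g + f * deriv g) := by
  funext x
  rw [(((hf x).hasDerivAt.pow (p + 1)).mul (hg x).hasDerivAt).deriv]
  simp only [Pi.mul_apply, Pi.add_apply, Pi.pow_apply, Pi.smul_apply, smul_eq_mul]
  push_cast
  ring

lemma contDiff_smul_deriv_mul_add_mul_deriv (hf : ContDiff 𝕜 ∞ f) (hg : ContDiff 𝕜 ∞ g) (c : 𝕜) :
    ContDiff 𝕜 ∞ (c • deriv f * g + f * deriv g) :=
  (((contDiff_infty_iff_deriv.mp hf).2.const_smul c).mul hg).add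
    (hf.mul (contDiff_infty_iff_deriv.mp hg).2)

variable (hf : ContDiff 𝕜 ∞ f) {a : 𝕜} (ha : f a = 0)
include hf ha

lemma iteratedDeriv_pow_mul_eq_zero (hg : ContDiff 𝕜 ∞ g) {p q : ℕ} (hq : q < p) :
    iteratedDeriv q (f ^ p * g) a = 0 := by
  induction p generalizing g q with
  | zero => omega
  | succ p ih =>
    cases q with
    | zero => simp [ha]
    | succ q =>
      rw [iteratedDeriv_succ', deriv_pow_succ_mul (hf.differentiable (by simp))
        (hg.differentiable (by simp))]
      exact ih (contDiff_smul_deriv_mul_add_mul_deriv hf hg _) (by omega)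

lemma iteratedDeriv_pow_mul_self (hg : ContDiff 𝕜 ∞ g) (p : ℕ) :
    iteratedDeriv p (f ^ p * g) a = p ! * deriv f a ^ p * g a := by
  induction p generalizing g with
  | zero => simp
  | succ p ih =>
    rw [iteratedDeriv_succ', deriv_pow_succ_mul (hf.differentiable (by simp))
      (hg.differentiable (by simp)), ih (contDiff_smul_deriv_mul_add_mul_deriv hf hg _)]
    simp only [Pi.mul_apply, Pi.add_apply, Pi.smul_apply, smul_eq_mul, ha, Nat.factorial_succ]
    push_cast
    ring

end PowMul

section NodeFun

variable {ι : Type*} [Fintype ι] [DecidableEq ι] (t : ι → ℝ) (m : ι → ℕ)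

/-- The paper's `(cos^l / sin^l)(x - t j) ∏ᵢ sin^(m i)(x - t i)` with `l = m j - p`. -/
noncomputable def nodeFun (j : ι) (p : ℕ) : ℝ → ℝ :=
  (fun x => sin (x - t j)) ^ p *
    ((fun x => cos (x - t j)) ^ (m j - p) * ∏ i ∈ univ.erase j, (fun x => sin (x - t i)) ^ m i)

lemma nodeFun_mem_trigSpace {j : ι} {p : ℕ} (hp : p ≤ m j) :
    nodeFun t m j p ∈ trigSpace (∑ i, m i) := by
  have hsin := SetLike.pow_mem_graded p (sin_sub_mem_trigSpace (t j))
  have hcos := SetLike.pow_mem_graded (m j - p) (cos_sub_mem_trigSpace (t j))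
  have hprod := SetLike.prod_pow_mem_graded trigSpace (fun _ => 1) _ m (F := univ.erase j)
    fun i _ => sin_sub_mem_trigSpace (t i)
  rw [nodeFun]
  convert SetLike.mul_mem_graded hsin (SetLike.mul_mem_graded hcos hprod) using 2
  simp only [smul_eq_mul, mul_one]
  rw [← add_sum_erase _ _ (mem_univ j)]
  omega

lemma contDiff_nodeFun_cofactor (j : ι) (p : ℕ) : ContDiff ℝ ∞
    ((fun x => cos (x - t j)) ^ (m j - p) * ∏ i ∈ univ.erase j, (fun x => sin (x - t i)) ^ m i) :=
  ((contDiff_cos_sub _).pow _).mul (contDiff_prod' fun _ _ => (contDiff_sin_sub _).pow _)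

lemma contDiff_nodeFun (j : ι) (p : ℕ) : ContDiff ℝ ∞ (nodeFun t m j p) :=
  ((contDiff_sin_sub _).pow p).mul (contDiff_nodeFun_cofactor t m j p)

lemma iteratedDeriv_nodeFun_of_lt {j : ι} {p q : ℕ} (hq : q < p) :
    iteratedDeriv q (nodeFun t m j p) (t j) = 0 :=
  iteratedDeriv_pow_mul_eq_zero (contDiff_sin_sub _) (by simp)
    (contDiff_nodeFun_cofactor t m j p) hq

lemma iteratedDeriv_nodeFun_self_ne_zero (j : ι) (p : ℕ) (ht : ∀ i ≠ j, sin (t j - t i) ≠ 0) :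
    iteratedDeriv p (nodeFun t m j p) (t j) ≠ 0 := by
  rw [nodeFun, iteratedDeriv_pow_mul_self (contDiff_sin_sub _) (by simp)
    (contDiff_nodeFun_cofactor t m j p)]
  have hderiv : deriv (fun x => sin (x - t j)) (t j) = 1 := by simp
  simp only [hderiv, Pi.mul_apply, Pi.pow_apply, prod_apply, sub_self, cos_zero, one_pow,
    mul_one, one_mul]
  exact mul_ne_zero (by positivity)
    (prod_ne_zero_iff.mpr fun i hi => pow_ne_zero _ (ht i (ne_of_mem_erase hi)))

lemma iteratedDeriv_nodeFun_of_ne {j j₀ : ι} (hj : j ≠ j₀) (p : ℕ) {q : ℕ} (hq : q < m j₀) :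
    iteratedDeriv q (nodeFun t m j p) (t j₀) = 0 := by
  have hfactor : nodeFun t m j p = (fun x => sin (x - t j₀)) ^ m j₀ *
      ((fun x => sin (x - t j)) ^ p * (fun x => cos (x - t j)) ^ (m j - p) *
        ∏ i ∈ (univ.erase j).erase j₀, (fun x => sin (x - t i)) ^ m i) := by
    rw [nodeFun, ← mul_prod_erase _ _ (mem_erase.mpr ⟨hj.symm, mem_univ j₀⟩)]
    ring
  rw [hfactor]
  exact iteratedDeriv_pow_mul_eq_zero (contDiff_sin_sub _) (by simp)
    ((((contDiff_sin_sub _).pow _).mul ((contDiff_cos_sub _).pow _)).mul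
      (contDiff_prod' fun _ _ => (contDiff_sin_sub _).pow _)) hq

lemma iteratedDeriv_sum_smul_nodeFun (c : ∀ j, Fin (m j) → ℝ) {j₀ : ι} {l : ℕ}
    (hl : l < m j₀) :
    iteratedDeriv l (∑ j, ∑ p : Fin (m j), c j p • nodeFun t m j p) (t j₀) =
      ∑ p, c j₀ p * iteratedDeriv l (nodeFun t m j₀ p) (t j₀) := by
  have hsmooth (j : ι) (p : Fin (m j)) : ContDiff ℝ l (c j p • nodeFun t m j p) :=
    ((contDiff_nodeFun t m j p).of_le (by exact_mod_cast le_top)).const_smul (c j p)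
  have hinner (j : ι) : iteratedDeriv l (∑ p : Fin (m j), c j p • nodeFun t m j p) (t j₀) =
      ∑ p, c j p * iteratedDeriv l (nodeFun t m j p) (t j₀) := by
    rw [iteratedDeriv_sum fun p _ => (hsmooth j p).contDiffAt]
    simp
  rw [iteratedDeriv_sum fun j _ => by
      rw [sum_fn]
      exact (ContDiff.sum fun p _ => hsmooth j p).contDiffAt,
    sum_eq_single_of_mem j₀ (mem_univ _) fun j _ hj => ?_, hinner]
  simp [hinner, iteratedDeriv_nodeFun_of_ne t m hj _ hl]

lemma Matrix.mulVec_surjective_of_isLowerTriangular {K n : Type*} [Field K] [Fintype n]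
    [LinearOrder n] [DecidableEq n] {A : Matrix n n K} (hA : A.IsLowerTriangular)
    (hdiag : ∀ i, A i i ≠ 0) : Function.Surjective A.mulVec := by
  rw [Matrix.mulVec_surjective_iff_isUnit, Matrix.isUnit_iff_isUnit_det,
    Matrix.det_of_isLowerTriangular A hA, isUnit_iff_ne_zero]
  exact prod_ne_zero_iff.mpr fun i _ => hdiag i

lemma exists_sum_mul_iteratedDeriv_nodeFun_eq (j : ι) (ht : ∀ i ≠ j, sin (t j - t i) ≠ 0)
    (w : Fin (m j) → ℝ) :
    ∃ c : Fin (m j) → ℝ, ∀ l : Fin (m j),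
      ∑ p, c p * iteratedDeriv l (nodeFun t m j p) (t j) = w l := by
  let A : Matrix (Fin (m j)) (Fin (m j)) ℝ :=
    .of fun l p => iteratedDeriv l (nodeFun t m j p) (t j)
  have hA : A.IsLowerTriangular := fun l p hlp => iteratedDeriv_nodeFun_of_lt t m hlp
  obtain ⟨c, hc⟩ := Matrix.mulVec_surjective_of_isLowerTriangular hA
    (fun p => iteratedDeriv_nodeFun_self_ne_zero t m j p ht) w
  exact ⟨c, fun l => by simpa [A, Matrix.mulVec, dotProduct, mul_comm] using congrFun hc l⟩

end NodeFun

theorem stmt8_general (M k : ℕ)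
    (t : Fin k → ℝ) (ht : ∀ j, t j ∈ Set.Ioo (0:ℝ) π)
    (htmono : StrictMono t)
    (mult : Fin k → ℕ)
    (hsum : ∑ j, mult j = M)
    (𝒯 : Submodule ℝ (ℝ → ℝ))
    (h𝒯 : 𝒯 = Submodule.span ℝ
      {f : ℝ → ℝ | ∃ s : ℕ, s ≤ M ∧ s % 2 = M % 2 ∧
        ((f = fun x => Real.cos ((s : ℝ) * x)) ∨ (f = fun x => Real.sin ((s : ℝ) * x)))}) :
    ∀ y : (j : Fin k) → Fin (mult j) → ℝ,
      ∃ h ∈ 𝒯, ∀ (j : Fin k) (l : Fin (mult j)),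
        iteratedDeriv l.val h (t j) = y j l := by
  subst h𝒯 hsum
  intro y
  have hsin (j : Fin k) : ∀ i ≠ j, sin (t j - t i) ≠ 0 := fun i hij =>
    sin_sub_ne_zero_of_mem_Ioo (ht j) (ht i) (htmono.injective.ne hij.symm)
  choose c hc using fun j => exists_sum_mul_iteratedDeriv_nodeFun_eq t mult j (hsin j) (y j)
  refine ⟨∑ j, ∑ p, c j p • nodeFun t mult j p, ?_, fun j l => ?_⟩
  · exact sum_mem fun j _ => sum_mem fun p _ =>
      Submodule.smul_mem _ _ (nodeFun_mem_trigSpace t mult p.isLt.le)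
  · rw [iteratedDeriv_sum_smul_nodeFun t mult c l.isLt, hc]

/-- With `M = m/2`, `𝒯` the `(M+1)`-dimensional space of trigonometric
polynomials spanned by `cos(st), sin(st)` for `0 ≤ s ≤ M` of the same parity as `M`,
and distinct times `t₁ < ⋯ < t_k` in `(0,π)` with multiplicities `mⱼ` summing to `M`,
the evaluation map `𝒯 → ℝ^M`, `h ↦ (h^{(l)}(tⱼ))_{0 ≤ l ≤ mⱼ−1}`, is surjective. -/
theorem stmt8 (M k : ℕ) (hM : 0 < M)
    (t : Fin k → ℝ) (ht : ∀ j, t j ∈ Set.Ioo (0:ℝ) π)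
    (htmono : StrictMono t)
    (mult : Fin k → ℕ) (hmult : ∀ j, 0 < mult j)
    (hsum : ∑ j, mult j = M)
    (𝒯 : Submodule ℝ (ℝ → ℝ))
    (h𝒯 : 𝒯 = Submodule.span ℝ
      {f : ℝ → ℝ | ∃ s : ℕ, s ≤ M ∧ s % 2 = M % 2 ∧
        ((f = fun x => Real.cos ((s : ℝ) * x)) ∨ (f = fun x => Real.sin ((s : ℝ) * x)))}) :
    ∀ y : (j : Fin k) → Fin (mult j) → ℝ,
      ∃ h ∈ 𝒯, ∀ (j : Fin k) (l : Fin (mult j)),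
        iteratedDeriv l.val h (t j) = y j l :=
  stmt8_general M k t ht htmono mult hsum 𝒯 h𝒯
end

section
/- Let ℝ^k = Σ₁ ⊕ Σ₂ be an orthogonal decomposition and let Γ be a set of affine hyperplanes (walls) in ℝ^k, invariant under the group W generated by reflections in the walls. Suppose: (a) only finitely many walls have normal vector not tangent to Σ₂, and (b) for every unit vector u₂ ∈ Σ₂ there are infinitely many walls with normal v tangent to Σ₂ satisfying ⟨v, u₂⟩ ≠ 0. Then every wall in Γ has normal vector tangent to Σ₁ or tangent to Σ₂. -/
open Real

/-! If the normal `u` of a wall lies neither in `Σ₂ᗮ` nor in `Σ₂`, its projection `p` to `Σ₂` is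
nonzero, and (b) for `p / ‖p‖` gives infinitely many walls with normal `v ∈ Σ₂` and
`⟪v, u⟫ = ⟪v, p⟫ ≠ 0`. Their mirror images in the wall of `u` have normals `v - 2⟪v, u⟫u ∉ Σ₂`
(otherwise `u ∈ Σ₂`), and reflection is injective on walls, contradicting (a). -/

section Walls

variable {E : Type*} [NormedAddCommGroup E] [InnerProductSpace ℝ E]

def reflectWall (w w' : E × ℝ) : E × ℝ :=
  (w'.1 - (2 * inner ℝ w'.1 w.1) • w.1, w'.2 - 2 * w.2 * inner ℝ w'.1 w.1)

lemma inner_reflectWall_fst {w : E × ℝ} (hw : ‖w.1‖ = 1) (w' : E × ℝ) :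
    inner ℝ (reflectWall w w').1 w.1 = -inner ℝ w'.1 w.1 := by
  simp only [reflectWall, inner_sub_left, real_inner_smul_left, real_inner_self_eq_norm_sq, hw]
  ring

lemma reflectWall_involutive {w : E × ℝ} (hw : ‖w.1‖ = 1) :
    Function.Involutive (reflectWall w) := by
  intro w'
  have h := inner_reflectWall_fst hw w'
  ext
  · simp only [reflectWall] at h ⊢
    rw [h]
    module
  · simp only [reflectWall] at h ⊢
    rw [h]
    ring

lemma exists_norm_eq_one_mem_inner_ne_zero {K : Submodule ℝ E} [K.HasOrthogonalProjection]
    {u : E} (hu : u ∉ Kᗮ) :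
    ∃ e ∈ K, ‖e‖ = 1 ∧ ∀ v ∈ K, inner ℝ v e ≠ 0 → inner ℝ v u ≠ 0 := by
  set p := K.starProjection u
  have hp : p ≠ 0 := fun h => hu (K.starProjection_apply_eq_zero_iff.mp h)
  have inner_p : ∀ v ∈ K, inner ℝ v p = inner ℝ v u := fun v hv => by
    rw [← K.inner_starProjection_left_eq_right, K.starProjection_eq_self_iff.mpr hv]
  refine ⟨‖p‖⁻¹ • p, K.smul_mem _ (K.starProjection_apply_mem u), norm_smul_inv_norm hp,
    fun v hv hve => ?_⟩
  rw [real_inner_smul_right, inner_p v hv] at hve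
  exact right_ne_zero_of_mul hve

end Walls

/-- Let `ℝ^k = Sig1 ⊕ Sig2` be an orthogonal decomposition and `Γ` a
set of walls (affine hyperplanes, encoded as pairs `(unit normal, offset)`),
invariant under the reflections in its own walls. If (a) only finitely many
walls have normal not tangent to `Sig2`, and (b) for every unit vector
`u₂ ∈ Sig2` there are infinitely many walls with normal `v` tangent to `Sig2` and
`⟪v, u₂⟫ ≠ 0`, then every wall has normal tangent to `Sig1` or tangent to `Sig2`. -/
theorem stmt18 (k : ℕ)
    (Sig2 : Submodule ℝ (EuclideanSpace ℝ (Fin k)))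
    (Sig1 : Submodule ℝ (EuclideanSpace ℝ (Fin k))) (hSig : Sig1 = Sig2ᗮ)
    (Γ : Set (EuclideanSpace ℝ (Fin k) × ℝ))
    (hunit : ∀ w ∈ Γ, ‖w.1‖ = 1)
    -- `Γ` is invariant under the reflection through each of its walls:
    (hrefl : ∀ w ∈ Γ, ∀ w' ∈ Γ,
      (w'.1 - (2 * (inner ℝ w'.1 w.1 : ℝ)) • w.1,
        w'.2 - 2 * w.2 * (inner ℝ w'.1 w.1 : ℝ)) ∈ Γ)
    -- (a): only finitely many walls have normal not tangent to Sig2: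
    (hfin : {w ∈ Γ | w.1 ∉ Sig2}.Finite)
    -- (b): for every unit vector u₂ ∈ Sig2, infinitely many walls have normal
    -- tangent to Sig2 and not perpendicular to u₂:
    (hinf : ∀ u₂ : EuclideanSpace ℝ (Fin k), u₂ ∈ Sig2 → ‖u₂‖ = 1 →
      {w ∈ Γ | w.1 ∈ Sig2 ∧ (inner ℝ w.1 u₂ : ℝ) ≠ 0}.Infinite) :
    ∀ w ∈ Γ, w.1 ∈ Sig1 ∨ w.1 ∈ Sig2 := by
  subst hSig
  intro w hw
  by_contra! ⟨hw₁, hw₂⟩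
  obtain ⟨e, he, he_norm, inner_ne_zero⟩ := exists_norm_eq_one_mem_inner_ne_zero hw₁
  have reflect_mapsTo : Set.MapsTo (reflectWall w) {w' ∈ Γ | w'.1 ∈ Sig2 ∧ inner ℝ w'.1 e ≠ 0}
      {w' ∈ Γ | w'.1 ∉ Sig2} := by
    rintro w' ⟨hw'Γ, hw'₂, hw'e⟩
    refine ⟨hrefl w hw w' hw'Γ, ?_⟩
    rw [reflectWall, Sig2.sub_mem_iff_right hw'₂,
      Sig2.smul_mem_iff (mul_ne_zero two_ne_zero (inner_ne_zero _ hw'₂ hw'e))]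
    exact hw₂
  exact Set.infinite_of_injOn_mapsTo (reflectWall_involutive (hunit w hw)).injective.injOn
    reflect_mapsTo (hinf e he he_norm) hfin
end
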